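/- Let G be a (d,k;+1)-digraph with outlier automorphism o, and let u_0, u_1, ..., u_r be a directed path in G with r ≤ k. If t = lcm(ω(u_0), ω(u_r)), where ω(v) denotes the order of v under o (the least positive integer m with o^m(v) = v), then ω(u_i) divides t for all 0 ≤ i ≤ r. -/

import Mathlib

/-- `IsWalk A w` means the nonempty list `w` of vertices is a directed walk
in the digraph with adjacency relation `A`. -/
def IsWalk {V : Type*} (A : V → V → Prop) : List V → Prop
  | [] => False
  | [_] => True
  | a :: b :: l => A a b ∧ IsWalk A (b :: l)

/-- `WalkFrom A u v w` means `w` is a directed walk from `u` to `v`.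
A walk represented by a list of length `n+1` has length `n` as a walk. -/
def WalkFrom {V : Type*} (A : V → V → Prop) (u v : V) (w : List V) : Prop :=
  IsWalk A w ∧ w.head? = some u ∧ w.getLast? = some v

/-- A digraph is `k`-geodetic if for any (not necessarily distinct) vertices
`u, v` there is at most one directed walk from `u` to `v` of length `≤ k`. -/
def KGeodetic {V : Type*} (A : V → V → Prop) (k : ℕ) : Prop :=
  ∀ u v : V, ∀ w₁ w₂ : List V, WalkFrom A u v w₁ → WalkFrom A u v w₂ →
    w₁.length ≤ k + 1 → w₂.length ≤ k + 1 → w₁ = w₂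

/-- `ReachIn A k u v` means there is a directed walk from `u` to `v` of
length at most `k`. -/
def ReachIn {V : Type*} (A : V → V → Prop) (k : ℕ) (u v : V) : Prop :=
  ∃ w : List V, WalkFrom A u v w ∧ w.length ≤ k + 1

/-- The directed Moore bound `M(d,k) = 1 + d + d^2 + ... + d^k`. -/
def mooreBound (d k : ℕ) : ℕ := ∑ i ∈ Finset.range (k + 1), d ^ i

/-- `o` is the outlier function of a `k`-geodetic digraph with excess one:
for each vertex `u`, `o u` is the unique vertex not reachable from `u` by a
walk of length at most `k`. -/
def IsOutlierFn {V : Type*} (A : V → V → Prop) (k : ℕ) (o : V → V) : Prop :=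
  ∀ u v : V, ¬ ReachIn A k u v ↔ v = o u

/-! The power `o^[t]`, with `t = lcm(ω u₀, ω uᵣ)`, is a digraph endomorphism fixing both ends
of the walk, so it maps the walk to another walk of length `≤ k` between the same vertices.
By `k`-geodecity the two walks coincide, hence `o^[t]` fixes every vertex of the walk, and the
minimal period `ω x` of each such vertex divides `t`. -/

open Function

lemma IsWalk.map {V : Type*} {A : V → V → Prop} {g : V → V}
    (hg : ∀ a b : V, A a b → A (g a) (g b)) :
    ∀ w : List V, IsWalk A w → IsWalk A (w.map g)
  | [], h => h
  | [_], _ => trivial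
  | a :: b :: l, h => ⟨hg a b h.1, IsWalk.map hg (b :: l) h.2⟩

lemma WalkFrom.map_of_fixed {V : Type*} {A : V → V → Prop} {g : V → V} {u v : V} {w : List V}
    (hg : ∀ a b : V, A a b → A (g a) (g b)) (hu : g u = u) (hv : g v = v)
    (hw : WalkFrom A u v w) : WalkFrom A u v (w.map g) := by
  obtain ⟨hwalk, hhead, hlast⟩ := hw
  refine ⟨hwalk.map hg, ?_, ?_⟩
  · rw [List.head?_map, hhead, Option.map_some, hu]
  · rw [List.getLast?_map, hlast, Option.map_some, hv]

lemma KGeodetic.fixed_of_mem_walk {V : Type*} {A : V → V → Prop} {k : ℕ}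
    (hgeo : KGeodetic A k) {g : V → V} (hg : ∀ a b : V, A a b → A (g a) (g b))
    {u v : V} (hu : g u = u) (hv : g v = v) {w : List V}
    (hw : WalkFrom A u v w) (hlen : w.length ≤ k + 1) :
    ∀ x ∈ w, g x = x := by
  have hmap : w.map g = w :=
    hgeo u v _ w (hw.map_of_fixed hg hu hv) hw (by rwa [List.length_map]) hlen
  exact List.map_eq_map_iff.mp (hmap.trans (List.map_id w).symm)

lemma adj_iterate_of_adj {V : Type*} {A : V → V → Prop} {o : V → V}
    (ho : ∀ a b : V, A a b → A (o a) (o b)) (n : ℕ) :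
    ∀ a b : V, A a b → A (o^[n] a) (o^[n] b) := by
  induction n with
  | zero => exact fun _ _ h => h
  | succ n ih =>
    intro a b h
    rw [iterate_succ_apply', iterate_succ_apply']
    exact ho _ _ (ih a b h)

lemma eq_minimalPeriod_of_least_period {α : Type*} {f : α → α} {x : α} {p : ℕ}
    (hpos : 0 < p) (hfix : f^[p] x = x) (hmin : ∀ m : ℕ, 0 < m → f^[m] x = x → p ≤ m) :
    p = minimalPeriod f x := by
  have hper : IsPeriodicPt f p x := hfix
  refine le_antisymm (hmin _ ?_ (isPeriodicPt_minimalPeriod f x)) (hper.minimalPeriod_le hpos)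
  exact minimalPeriod_pos_of_mem_periodicPts (mk_mem_periodicPts hpos hper)

theorem stmt_14_general {V : Type*} (A : V → V → Prop) (k : ℕ)
    (hgeo : KGeodetic A k)
    (o : V → V)
    (hhom : ∀ a b : V, A a b ↔ A (o a) (o b))
    (ω : V → ℕ)
    (hω : ∀ v : V, 0 < ω v ∧ o^[ω v] v = v ∧ ∀ m : ℕ, 0 < m → o^[m] v = v → ω v ≤ m)
    (r : ℕ) (hr : r ≤ k) (u₀ uᵣ : V) (w : List V)
    (hw : WalkFrom A u₀ uᵣ w) (hlen : w.length = r + 1) :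
    ∀ x ∈ w, ω x ∣ Nat.lcm (ω u₀) (ω uᵣ) := by
  have hω_eq : ∀ v, ω v = minimalPeriod o v := fun v =>
    eq_minimalPeriod_of_least_period (hω v).1 (hω v).2.1 (hω v).2.2
  set t := Nat.lcm (ω u₀) (ω uᵣ)
  have hu₀ : IsPeriodicPt o t u₀ :=
    isPeriodicPt_iff_minimalPeriod_dvd.mpr (hω_eq u₀ ▸ Nat.dvd_lcm_left _ _)
  have huᵣ : IsPeriodicPt o t uᵣ :=
    isPeriodicPt_iff_minimalPeriod_dvd.mpr (hω_eq uᵣ ▸ Nat.dvd_lcm_right _ _)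
  have hfix := hgeo.fixed_of_mem_walk (adj_iterate_of_adj (fun a b => (hhom a b).mp) t)
    hu₀ huᵣ hw (by omega)
  intro x hx
  exact hω_eq x ▸ IsPeriodicPt.minimalPeriod_dvd (hfix x hx)

/-- Let `G` be a `(d,k;+1)`-digraph with outlier automorphism `o`, let `ω v`
denote the order of `v` under `o`, and let `u₀, u₁, …, u_r` be a directed path
with `r ≤ k`. Then `ω(u_i)` divides `lcm(ω(u₀), ω(u_r))` for every vertex of
the path. -/
theorem stmt_14 {V : Type*} [Fintype V] (A : V → V → Prop) (d k : ℕ)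
    (hd : 2 ≤ d) (hk : 2 ≤ k)
    (hgeo : KGeodetic A k)
    (hdeg : ∀ u : V, d ≤ Set.ncard {w : V | A u w})
    (hcard : Fintype.card V = mooreBound d k + 1)
    (o : V → V) (ho : IsOutlierFn A k o)
    (hbij : Function.Bijective o)
    (hhom : ∀ a b : V, A a b ↔ A (o a) (o b))
    (ω : V → ℕ)
    (hω : ∀ v : V, 0 < ω v ∧ o^[ω v] v = v ∧ ∀ m : ℕ, 0 < m → o^[m] v = v → ω v ≤ m)
    (r : ℕ) (hr : r ≤ k) (u₀ uᵣ : V) (w : List V)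
    (hw : WalkFrom A u₀ uᵣ w) (hlen : w.length = r + 1) :
    ∀ x ∈ w, ω x ∣ Nat.lcm (ω u₀) (ω uᵣ) :=
  stmt_14_general A k hgeo o hhom ω hω r hr u₀ uᵣ w hw hlen
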